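/- arXiv:1709.00142 — 8 statements merged into one kernel-verified Lean document; each statement's English description precedes it below -/
import Mathlib

section
/- Let S be a semigroup with a regular minimal ideal M, let I be an ideal of S, and let f : I → M be a retraction (a homomorphism fixing M pointwise). Then for all x ∈ I and s, t ∈ S¹, (sxt)f = s(xf)t. -/
namespace SG

variable {S : Type*} [Semigroup S]

/-- An ideal of a semigroup: a nonempty subset closed under left and right
multiplication by arbitrary elements. -/
def IsIdeal (I : Set S) : Prop :=
  I.Nonempty ∧ ∀ x ∈ I, ∀ a : S, a * x ∈ I ∧ x * a ∈ I

/-- The minimal ideal: an ideal contained in every ideal. -/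
def IsMinIdeal (M : Set S) : Prop :=
  IsIdeal M ∧ ∀ I : Set S, IsIdeal I → M ⊆ I

/-- Every element of the set is regular. -/
def RegularSet (M : Set S) : Prop := ∀ m ∈ M, ∃ y : S, m * y * m = m

/-- `f` is a retraction of the ideal `I` onto the minimal ideal `M`:
a homomorphism `I → M` fixing `M` pointwise. -/
def IsRetraction (I M : Set S) (f : S → S) : Prop :=
  (∀ x ∈ I, f x ∈ M) ∧ (∀ x ∈ I, ∀ y ∈ I, f (x * y) = f x * f y) ∧ ∀ x ∈ M, f x = x

/-- Green's R relation (via S¹ = `WithOne S`). -/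
def GreenR (a b : S) : Prop :=
  (∃ u : WithOne S, (a : WithOne S) * u = (b : WithOne S)) ∧
    ∃ v : WithOne S, (b : WithOne S) * v = (a : WithOne S)

/-- Green's L relation. -/
def GreenL (a b : S) : Prop :=
  (∃ u : WithOne S, u * (a : WithOne S) = (b : WithOne S)) ∧
    ∃ v : WithOne S, v * (b : WithOne S) = (a : WithOne S)

/-- Green's J relation. -/
def GreenJ (a b : S) : Prop :=
  (∃ u v : WithOne S, u * (a : WithOne S) * v = (b : WithOne S)) ∧
    ∃ u v : WithOne S, u * (b : WithOne S) * v = (a : WithOne S)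

/-- Green's H relation. -/
def GreenH (a b : S) : Prop := GreenR a b ∧ GreenL a b

/-- Green's D relation, as R ∘ L. -/
def GreenD (a b : S) : Prop := ∃ c : S, GreenR a c ∧ GreenL c b

/-- A set is stable if for its elements `x`: `xa J x → xa R x` and `ax J x → ax L x`. -/
def StableSet (J : Set S) : Prop :=
  ∀ x ∈ J, ∀ a : S, (GreenJ (x * a) x → GreenR (x * a) x) ∧ (GreenJ (a * x) x → GreenL (a * x) x)

/-- The set is a J-class. -/
def IsJClass (J : Set S) : Prop := ∃ a : S, J = {b | GreenJ a b}

/-- The set is a D-class. -/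
def IsDClass (J : Set S) : Prop := ∃ a : S, J = {b | GreenD a b}

/-- A binary relation is a congruence on the semigroup. -/
def IsCongruence (r : S → S → Prop) : Prop :=
  Equivalence r ∧ ∀ a b c : S, r a b → r (c * a) (c * b) ∧ r (a * c) (b * c)

/-- `N` is a normal subgroup of the subgroup `G` of `S` with identity `e`. -/
def IsNormalIn (N G : Set S) (e : S) : Prop :=
  N ⊆ G ∧ e ∈ N ∧ (∀ x ∈ N, ∀ y ∈ N, x * y ∈ N) ∧
    (∀ x ∈ N, ∃ y ∈ N, x * y = e ∧ y * x = e) ∧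
    ∀ g ∈ G, ∀ g' ∈ G, g * g' = e → g' * g = e → ∀ x ∈ N, g * x * g' ∈ N

/-- The relation ν_N = S¹(N × N)S¹ ∩ (J × J). -/
def Nu (J N : Set S) (a b : S) : Prop :=
  a ∈ J ∧ b ∈ J ∧ ∃ x ∈ N, ∃ y ∈ N, ∃ s t : WithOne S,
    s * (x : WithOne S) * t = (a : WithOne S) ∧ s * (y : WithOne S) * t = (b : WithOne S)

/-- `J` is disjoint from `I` and is minimal among the J-classes of `S \ I`. -/
def MinimalJClassOutside (J I : Set S) : Prop :=
  (∀ a ∈ J, a ∉ I) ∧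
    ∀ b : S, b ∉ I →
      (∃ a ∈ J, ∃ u v : WithOne S, u * (a : WithOne S) * v = (b : WithOne S)) → b ∈ J

end SG

/-- If `S` is a semigroup with a regular minimal ideal `M`, `I` an ideal
of `S` and `f : I → M` a retraction, then `(sxt)f = s(xf)t` for all `x ∈ I` and `s, t ∈ S¹`
(the cases where `s` or `t` is the adjoined identity being recorded by the first two
conjuncts). -/
theorem stmt0 {S : Type*} [Semigroup S] (M I : Set S) (f : S → S)
    (hM : SG.IsMinIdeal M) (hreg : SG.RegularSet M)
    (hI : SG.IsIdeal I) (hf : SG.IsRetraction I M f) :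
    ∀ x ∈ I, (∀ s : S, f (s * x) = s * f x) ∧ (∀ t : S, f (x * t) = f x * t) ∧
      ∀ s t : S, f (s * x * t) = s * f x * t := by
  obtain ⟨hfM, hfmul, hffix⟩ := hf
  have hMI : M ⊆ I := hM.2 I hI
  have hMid := hM.1.2
  have hIid := hI.2
  have key : ∀ x ∈ I, ∀ y : S, f x * y * f x = f x →
      x * (y * f x) = f x ∧ (f x * y) * x = f x := by
    intro x hx y hy
    have hm : f x ∈ M := hfM x hx
    have hym : y * f x ∈ M := (hMid (f x) hm y).1
    have hmy : f x * y ∈ M := (hMid (f x) hm y).2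
    constructor
    · have h1 : f (x * (y * f x)) = f x := by
        rw [hfmul x hx _ (hMI hym), hffix _ hym, ← mul_assoc, hy]
      have h2 : x * (y * f x) ∈ M := (hMid _ hym x).1
      rw [← hffix _ h2, h1]
    · have h1 : f ((f x * y) * x) = f x := by
        rw [hfmul _ (hMI hmy) x hx, hffix _ hmy, hy]
      have h2 : (f x * y) * x ∈ M := (hMid _ hmy x).2
      rw [← hffix _ h2, h1]
  have hleft : ∀ x ∈ I, ∀ s : S, f (s * x) = s * f x := by
    intro x hx s
    have hsx : s * x ∈ I := (hIid x hx s).1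
    obtain ⟨y, hy⟩ := hreg (f x) (hfM x hx)
    obtain ⟨y', hy'⟩ := hreg (f (s * x)) (hfM _ hsx)
    set m := f x with hmdef
    set m' := f (s * x) with hm'def
    have hm : m ∈ M := hfM x hx
    have hm' : m' ∈ M := hfM _ hsx
    have hxym : x * (y * m) = m := (key x hx y hy).1
    have hym : y * m ∈ M := (hMid m hm y).1
    have hm'y' : m' * y' ∈ M := (hMid m' hm' y').2
    have e1 : s * m = m' * (y * m) := by
      have h1 : (s * x) * (y * m) = s * m := by rw [mul_assoc, hxym]
      have h2 : (s * x) * (y * m) ∈ M := (hMid _ hym (s * x)).1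
      have h3 : f ((s * x) * (y * m)) = m' * (y * m) := by
        rw [hfmul _ hsx _ (hMI hym), hffix _ hym]
      rw [← h1, ← hffix _ h2, h3]
    have e2 : m' = m' * (y * m) := by
      have h1 : (m' * y') * (s * x) = m' := by
        have ha : f ((m' * y') * (s * x)) = m' := by
          rw [hfmul _ (hMI hm'y') _ hsx, hffix _ hm'y', hy']
        have hb : (m' * y') * (s * x) ∈ M := (hMid _ hm'y' (s * x)).2
        rw [← hffix _ hb, ha]
      have hm'y's : m' * y' * s ∈ M := (hMid _ hm'y' s).2
      have h2 : (m' * y' * s) * x = (m' * y' * s) * m := by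
        have ha : f ((m' * y' * s) * x) = (m' * y' * s) * m := by
          rw [hfmul _ (hMI hm'y's) x hx, hffix _ hm'y's]
        have hb : (m' * y' * s) * x ∈ M := (hMid _ hm'y's x).2
        rw [← hffix _ hb, ha]
      calc m' = (m' * y') * (s * x) := h1.symm
        _ = (m' * y' * s) * x := by rw [← mul_assoc]
        _ = (m' * y' * s) * m := h2
        _ = (m' * y') * (s * m) := by rw [mul_assoc]
        _ = (m' * y') * (m' * (y * m)) := by rw [e1]
        _ = (m' * y' * m') * (y * m) := by rw [← mul_assoc]
        _ = m' * (y * m) := by rw [hy']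
    rw [e1]; exact e2
  have hright : ∀ x ∈ I, ∀ t : S, f (x * t) = f x * t := by
    intro x hx t
    have hxt : x * t ∈ I := (hIid x hx t).2
    obtain ⟨y, hy⟩ := hreg (f x) (hfM x hx)
    obtain ⟨y', hy'⟩ := hreg (f (x * t)) (hfM _ hxt)
    set m := f x with hmdef
    set m' := f (x * t) with hm'def
    have hm : m ∈ M := hfM x hx
    have hm' : m' ∈ M := hfM _ hxt
    have hmyx : (m * y) * x = m := (key x hx y hy).2
    have hmy : m * y ∈ M := (hMid m hm y).2
    have hy'm' : y' * m' ∈ M := (hMid m' hm' y').1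
    have e1 : m * t = (m * y) * m' := by
      have h1 : (m * y) * (x * t) = m * t := by rw [← mul_assoc, hmyx]
      have h2 : (m * y) * (x * t) ∈ M := (hMid _ hmy (x * t)).2
      have h3 : f ((m * y) * (x * t)) = (m * y) * m' := by
        rw [hfmul _ (hMI hmy) _ hxt, hffix _ hmy]
      rw [← h1, ← hffix _ h2, h3]
    have e2 : m' = (m * y) * m' := by
      have h1 : (x * t) * (y' * m') = m' := by
        have ha : f ((x * t) * (y' * m')) = m' := by
          rw [hfmul _ hxt _ (hMI hy'm'), hffix _ hy'm', ← mul_assoc, hy']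
        have hb : (x * t) * (y' * m') ∈ M := (hMid _ hy'm' (x * t)).1
        rw [← hffix _ hb, ha]
      have hty'm' : t * (y' * m') ∈ M := (hMid _ hy'm' t).1
      have h2 : x * (t * (y' * m')) = m * (t * (y' * m')) := by
        have ha : f (x * (t * (y' * m'))) = m * (t * (y' * m')) := by
          rw [hfmul x hx _ (hMI hty'm'), hffix _ hty'm']
        have hb : x * (t * (y' * m')) ∈ M := (hMid _ hty'm' x).1
        rw [← hffix _ hb, ha]
      calc m' = (x * t) * (y' * m') := h1.symm
        _ = x * (t * (y' * m')) := by rw [mul_assoc]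
        _ = m * (t * (y' * m')) := h2
        _ = (m * t) * (y' * m') := by rw [← mul_assoc]
        _ = ((m * y) * m') * (y' * m') := by rw [e1]
        _ = (m * y) * (m' * y' * m') := by rw [mul_assoc, mul_assoc m' y' m']
        _ = (m * y) * m' := by rw [hy']
    rw [e1]; exact e2
  intro x hx
  refine ⟨hleft x hx, hright x hx, fun s t => ?_⟩
  have hxt : x * t ∈ I := (hIid x hx t).2
  rw [mul_assoc, hleft _ hxt s, hright x hx t, ← mul_assoc]
end

section
/- Let S be a semigroup with a regular minimal ideal M. If I is a retractable ideal of S, then the retraction I → M is unique. -/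
/-- If `S` is a semigroup with a regular minimal ideal `M` and `I` is a
retractable ideal of `S`, then the retraction `I → M` is unique. -/
theorem stmt1 {S : Type*} [Semigroup S] (M I : Set S) (f g : S → S)
    (hM : SG.IsMinIdeal M) (hreg : SG.RegularSet M) (hI : SG.IsIdeal I)
    (hf : SG.IsRetraction I M f) (hg : SG.IsRetraction I M g) :
    ∀ x ∈ I, f x = g x := by
  intro x hx
  obtain ⟨hMI, hMmin⟩ := hM
  have hMsubI : M ⊆ I := hMmin I hI
  set a := f x with ha
  set b := g x with hb
  have haM : a ∈ M := hf.1 x hx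
  have hbM : b ∈ M := hg.1 x hx
  -- key relations
  have key1 : ∀ m ∈ M, m * a = m * b := by
    intro m hm
    have hmx : m * x ∈ M := (hMI.2 m hm x).2
    have h1 : m * x = m * a := by
      have := hf.2.1 m (hMsubI hm) x hx
      rw [hf.2.2 m hm] at this
      rw [← hf.2.2 _ hmx, this]
    have h2 : m * x = m * b := by
      have := hg.2.1 m (hMsubI hm) x hx
      rw [hg.2.2 m hm] at this
      rw [← hg.2.2 _ hmx, this]
    rw [← h1, h2]
  have key2 : ∀ m ∈ M, a * m = b * m := by
    intro m hm
    have hxm : x * m ∈ M := (hMI.2 m hm x).1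
    have h1 : x * m = a * m := by
      have := hf.2.1 x hx m (hMsubI hm)
      rw [hf.2.2 m hm] at this
      rw [← hf.2.2 _ hxm, this]
    have h2 : x * m = b * m := by
      have := hg.2.1 x hx m (hMsubI hm)
      rw [hg.2.2 m hm] at this
      rw [← hg.2.2 _ hxm, this]
    rw [← h1, h2]
  obtain ⟨y, hy⟩ := hreg a haM
  obtain ⟨z, hz⟩ := hreg b hbM
  have hayM : a * y ∈ M := (hMI.2 a haM y).2
  have hbzM : b * z ∈ M := (hMI.2 b hbM z).2
  have hzaM : z * a ∈ M := (hMI.2 a haM z).1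
  -- a = a*y*b
  have e1 : a = a * y * b := by rw [← key1 _ hayM, hy]
  -- b = b*z*a
  have e2 : b = b * z * a := by rw [key1 _ hbzM, hz]
  -- a = a*z*a
  have e3 : a = a * z * a := by
    calc a = a * y * b := e1
    _ = a * y * (b * z * a) := by rw [← e2]
    _ = (a * y * b) * z * a := by simp [mul_assoc]
    _ = a * z * a := by rw [← e1]
  -- a*z*a = b*z*a = b
  calc a = a * z * a := e3
  _ = a * (z * a) := by rw [mul_assoc]
  _ = b * (z * a) := key2 _ hzaM
  _ = b * z * a := by rw [mul_assoc]
  _ = b := e2.symm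
end

section
/- Let S be a semigroup with a regular minimal ideal M. The union of any non-empty family of retractable ideals of S is again a retractable ideal. Consequently, S contains a unique maximal retractable ideal. -/
section Aux

variable {S : Type*} [Semigroup S]

/-- `p ∈ M` acts on `M` (by translations) exactly as `x` does. -/
def SGCorr (M : Set S) (x p : S) : Prop :=
  p ∈ M ∧ ∀ m ∈ M, p * m = x * m ∧ m * p = m * x

lemma sgcorr_uniq (M : Set S) (hM : SG.IsMinIdeal M) (hreg : SG.RegularSet M)
    {x p q : S} (hp : SGCorr M x p) (hq : SGCorr M x q) : p = q := by
  obtain ⟨hpM, hp2⟩ := hp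
  obtain ⟨hqM, hq2⟩ := hq
  have cls : ∀ m ∈ M, ∀ a : S, a * m ∈ M ∧ m * a ∈ M := hM.1.2
  have key : ∀ m ∈ M, p * m = q * m ∧ m * p = m * q := by
    intro m hm
    exact ⟨(hp2 m hm).1.trans (hq2 m hm).1.symm,
           (hp2 m hm).2.trans (hq2 m hm).2.symm⟩
  obtain ⟨y0, hy0⟩ := hreg p hpM
  obtain ⟨z0, hz0⟩ := hreg q hqM
  set y := y0 * p * y0 with hy
  set z := z0 * q * z0 with hz
  have hyM : y ∈ M := by
    have h1 : p * y0 ∈ M := (cls p hpM y0).2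
    have h2 : y0 * (p * y0) ∈ M := (cls _ h1 y0).1
    have : y = y0 * (p * y0) := by rw [hy, mul_assoc]
    rw [this]; exact h2
  have hzM : z ∈ M := by
    have h1 : q * z0 ∈ M := (cls q hqM z0).2
    have h2 : z0 * (q * z0) ∈ M := (cls _ h1 z0).1
    have : z = z0 * (q * z0) := by rw [hz, mul_assoc]
    rw [this]; exact h2
  have hpyp : p * y * p = p := by
    rw [hy]; simp only [← mul_assoc]; rw [hy0, hy0]
  have hqzq : q * z * q = q := by
    rw [hz]; simp only [← mul_assoc]; rw [hz0, hz0]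
  have hypM : y * p ∈ M := (cls y hyM p).2
  have hqyM : q * y ∈ M := (cls y hyM q).1
  have hzqM : z * q ∈ M := (cls z hzM q).2
  have hpzM : p * z ∈ M := (cls z hzM p).1
  have hqzM : q * z ∈ M := (cls z hzM q).1
  have e1 : p = q * y * q := by
    calc p = p * (y * p) := by rw [← mul_assoc, hpyp]
    _ = q * (y * p) := (key _ hypM).1
    _ = q * y * p := (mul_assoc q y p).symm
    _ = q * y * q := (key _ hqyM).2
  have e2 : q = p * z * p := by
    calc q = q * (z * q) := by rw [← mul_assoc, hqzq]
    _ = p * (z * q) := ((key _ hzqM).1).symm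
    _ = p * z * q := (mul_assoc p z q).symm
    _ = p * z * p := ((key _ hpzM).2).symm
  calc p = q * y * q := e1
  _ = (p * z * p) * y * (p * z * p) := by rw [← e2]
  _ = p * z * (p * y * p) * z * p := by simp only [mul_assoc]
  _ = p * z * p * z * p := by rw [hpyp]
  _ = q * z * p := by rw [← e2]
  _ = q * z * q := (key _ hqzM).2
  _ = q := hqzq

lemma sgcorr_retr (M : Set S) (hM : SG.IsMinIdeal M) {I : Set S} (hI : SG.IsIdeal I)
    {f : S → S} (hf : SG.IsRetraction I M f) {x : S} (hx : x ∈ I) :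
    SGCorr M x (f x) := by
  obtain ⟨hf1, hf2, hf3⟩ := hf
  have hMI : M ⊆ I := hM.2 I hI
  refine ⟨hf1 x hx, fun m hm => ?_⟩
  have hmI : m ∈ I := hMI hm
  have hxm : x * m ∈ M := (hM.1.2 m hm x).1
  have hmx : m * x ∈ M := (hM.1.2 m hm x).2
  constructor
  · calc f x * m = f x * f m := by rw [hf3 m hm]
    _ = f (x * m) := (hf2 x hx m hmI).symm
    _ = x * m := hf3 _ hxm
  · calc m * f x = f m * f x := by rw [hf3 m hm]
    _ = f (m * x) := (hf2 m hmI x hx).symm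
    _ = m * x := hf3 _ hmx

lemma sgcorr_mul (M : Set S) (hM : SG.IsMinIdeal M) {x y p q : S}
    (hp : SGCorr M x p) (hq : SGCorr M y q) : SGCorr M (x * y) (p * q) := by
  have cls : ∀ m ∈ M, ∀ a : S, a * m ∈ M ∧ m * a ∈ M := hM.1.2
  refine ⟨(cls q hq.1 p).1, fun m hm => ?_⟩
  constructor
  · calc p * q * m = p * (q * m) := by rw [mul_assoc]
    _ = p * (y * m) := by rw [(hq.2 m hm).1]
    _ = x * (y * m) := (hp.2 _ (cls m hm y).1).1
    _ = x * y * m := by rw [mul_assoc]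
  · calc m * (p * q) = m * p * q := by rw [mul_assoc]
    _ = m * x * q := by rw [(hp.2 m hm).2]
    _ = m * x * y := (hq.2 _ (cls m hm x).2).2
    _ = m * (x * y) := by rw [mul_assoc]

lemma sg_main (M : Set S) (hM : SG.IsMinIdeal M) (hreg : SG.RegularSet M)
    (F : Set (Set S)) (hne : F.Nonempty)
    (hF : ∀ I ∈ F, SG.IsIdeal I ∧ ∃ f : S → S, SG.IsRetraction I M f) :
    SG.IsIdeal (⋃₀ F) ∧ ∃ f : S → S, SG.IsRetraction (⋃₀ F) M f := by
  classical
  obtain ⟨I0, hI0⟩ := hne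
  have hUideal : SG.IsIdeal (⋃₀ F) := by
    constructor
    · obtain ⟨x, hx⟩ := (hF I0 hI0).1.1
      exact ⟨x, I0, hI0, hx⟩
    · rintro x ⟨I, hIF, hxI⟩ a
      exact ⟨⟨I, hIF, ((hF I hIF).1.2 x hxI a).1⟩, ⟨I, hIF, ((hF I hIF).1.2 x hxI a).2⟩⟩
  set g : S → S := fun x => if h : ∃ p, SGCorr M x p then h.choose else x with hg
  have hcorr : ∀ x ∈ ⋃₀ F, SGCorr M x (g x) := by
    rintro x ⟨I, hIF, hxI⟩
    obtain ⟨hIideal, f, hf⟩ := hF I hIF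
    have hex : ∃ p, SGCorr M x p := ⟨f x, sgcorr_retr M hM hIideal hf hxI⟩
    simp only [hg, dif_pos hex]
    exact hex.choose_spec
  refine ⟨hUideal, g, fun x hx => (hcorr x hx).1, fun x hx y hy => ?_, fun m hm => ?_⟩
  · have hxy : x * y ∈ ⋃₀ F := (hUideal.2 x hx y).2
    exact sgcorr_uniq M hM hreg (hcorr _ hxy)
      (sgcorr_mul M hM (hcorr x hx) (hcorr y hy))
  · have hmU : m ∈ ⋃₀ F := ⟨I0, hI0, hM.2 I0 (hF I0 hI0).1 hm⟩
    exact sgcorr_uniq M hM hreg (hcorr m hmU) ⟨hm, fun _ _ => ⟨rfl, rfl⟩⟩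

end Aux

/-- In a semigroup with a regular minimal ideal, the union of any
nonempty family of retractable ideals is a retractable ideal; consequently there is a
unique maximal retractable ideal. -/
theorem stmt2 {S : Type*} [Semigroup S] (M : Set S)
    (hM : SG.IsMinIdeal M) (hreg : SG.RegularSet M)
    (F : Set (Set S)) (hne : F.Nonempty)
    (hF : ∀ I ∈ F, SG.IsIdeal I ∧ ∃ f : S → S, SG.IsRetraction I M f) :
    (SG.IsIdeal (⋃₀ F) ∧ ∃ f : S → S, SG.IsRetraction (⋃₀ F) M f) ∧
    ∃! J : Set S, (SG.IsIdeal J ∧ ∃ f : S → S, SG.IsRetraction J M f) ∧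
      ∀ I : Set S, (SG.IsIdeal I ∧ ∃ f : S → S, SG.IsRetraction I M f) → I ⊆ J := by
  have hMG : (SG.IsIdeal M ∧ ∃ f : S → S, SG.IsRetraction M M f) :=
    ⟨hM.1, id, fun x hx => hx, fun _ _ _ _ => rfl, fun _ _ => rfl⟩
  refine ⟨sg_main M hM hreg F hne hF, ⟨⋃₀ {I | SG.IsIdeal I ∧ ∃ f : S → S, SG.IsRetraction I M f},
    ⟨sg_main M hM hreg _ ⟨M, hMG⟩ (fun I hI => hI), fun I hI => Set.subset_sUnion_of_mem hI⟩,
    ?_⟩⟩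
  rintro J' ⟨hJ'r, hJ'max⟩
  exact Set.Subset.antisymm (Set.subset_sUnion_of_mem hJ'r)
    (Set.sUnion_subset fun I hI => hJ'max I hI)
end

section
/- If J is a stable J-class of a semigroup S, then J is a D-class. -/
/-! If `b = u a v` and `a = u' b v'`, stability gives `a R av` and then `av L u(av) = b`, so
`a D b`. The only subtlety is that `u` and `v` live in `S¹`, where either may be the adjoined
identity. -/

namespace SG

variable {S : Type*} [Semigroup S]

theorem GreenR.refl (a : S) : GreenR a a := ⟨⟨1, mul_one _⟩, ⟨1, mul_one _⟩⟩

theorem GreenL.refl (a : S) : GreenL a a := ⟨⟨1, one_mul _⟩, ⟨1, one_mul _⟩⟩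

theorem GreenJ.refl (a : S) : GreenJ a a := ⟨⟨1, 1, by simp⟩, ⟨1, 1, by simp⟩⟩

theorem GreenR.symm {a b : S} (h : GreenR a b) : GreenR b a := ⟨h.2, h.1⟩

theorem GreenL.symm {a b : S} (h : GreenL a b) : GreenL b a := ⟨h.2, h.1⟩

theorem GreenJ.symm {a b : S} (h : GreenJ a b) : GreenJ b a := ⟨h.2, h.1⟩

theorem GreenD.greenJ {a b : S} (h : GreenD a b) : GreenJ a b := by
  obtain ⟨c, ⟨⟨u, hu⟩, ⟨u', hu'⟩⟩, ⟨⟨w, hw⟩, ⟨w', hw'⟩⟩⟩ := h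
  exact ⟨⟨w, u, by rw [mul_assoc, hu, hw]⟩, ⟨w', u', by rw [hw', hu']⟩⟩

theorem _root_.WithOne.exists_coe_mul_eq_coe (a : S) (v : WithOne S) :
    ∃ c : S, (a : WithOne S) * v = c := by
  induction v with
  | one => exact ⟨a, mul_one _⟩
  | coe v => exact ⟨a * v, (WithOne.coe_mul a v).symm⟩

theorem StableSet.greenR_of_greenJ {J : Set S} (hJ : StableSet J) {x c : S} (hx : x ∈ J)
    {s : WithOne S} (hs : (x : WithOne S) * s = c) (hc : GreenJ c x) : GreenR c x := by
  induction s with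
  | one =>
    obtain rfl : x = c := WithOne.coe_inj.mp (by simpa using hs)
    exact GreenR.refl x
  | coe s =>
    obtain rfl : x * s = c := WithOne.coe_inj.mp hs
    exact (hJ x hx s).1 hc

theorem StableSet.greenL_of_greenJ {J : Set S} (hJ : StableSet J) {x c : S} (hx : x ∈ J)
    {s : WithOne S} (hs : s * (x : WithOne S) = c) (hc : GreenJ c x) : GreenL c x := by
  induction s with
  | one =>
    obtain rfl : x = c := WithOne.coe_inj.mp (by simpa using hs)
    exact GreenL.refl x
  | coe s =>
    obtain rfl : s * x = c := WithOne.coe_inj.mp hs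
    exact (hJ x hx s).2 hc

end SG

/-- A stable J-class of a semigroup is a D-class. -/
theorem stmt3 {S : Type*} [Semigroup S] (J : Set S)
    (hJ : SG.IsJClass J) (hs : SG.StableSet J) : SG.IsDClass J := by
  obtain ⟨a, rfl⟩ := hJ
  refine ⟨a, Set.ext fun b => ⟨fun hab => ?_, SG.GreenD.greenJ⟩⟩
  obtain ⟨⟨u, v, hb⟩, ⟨u', v', ha⟩⟩ := hab
  obtain ⟨c, hc⟩ := WithOne.exists_coe_mul_eq_coe a v
  have hca : SG.GreenJ c a :=
    ⟨⟨u' * u, v', by rw [← ha, ← hb, ← hc]; simp only [mul_assoc]⟩, ⟨1, v, by rw [one_mul, hc]⟩⟩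
  have hbc : SG.GreenJ b c :=
    ⟨⟨u', v' * v, by rw [← hc, ← ha]; simp only [mul_assoc]⟩,
      ⟨u, 1, by rw [mul_one, ← hc, ← hb, mul_assoc]⟩⟩
  have hR : SG.GreenR c a := hs.greenR_of_greenJ (SG.GreenJ.refl a) hc hca
  have hL : SG.GreenL b c :=
    hs.greenL_of_greenJ hca.symm (s := u) (by rw [← hb, ← hc, mul_assoc]) hbc
  exact ⟨c, hR.symm, hL.symm⟩
end

section
/- Let S be a semigroup with a stable minimal ideal M. Then M is completely regular (a union of groups). In particular, if Green's H relation restricted to M is trivial, then M is a rectangular band. -/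
namespace SGaux

variable {S : Type*} [Semigroup S]

/-- In a minimal ideal, any two elements are J-related. -/
lemma allJ {M : Set S} (hM : SG.IsMinIdeal M) :
    ∀ a ∈ M, ∀ b ∈ M, SG.GreenJ a b := by
  have key : ∀ a ∈ M, ∀ b ∈ M,
      ∃ u v : WithOne S, u * (a : WithOne S) * v = (b : WithOne S) := by
    intro a ha b hb
    have hI : SG.IsIdeal {c : S | ∃ u v : WithOne S,
        u * (a : WithOne S) * v = (c : WithOne S)} := by
      constructor
      · exact ⟨a, 1, 1, by simp⟩
      · rintro c ⟨u, v, huv⟩ s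
        constructor
        · refine ⟨(s : WithOne S) * u, v, ?_⟩
          rw [mul_assoc, mul_assoc, ← mul_assoc u, huv, ← WithOne.coe_mul]
        · refine ⟨u, v * (s : WithOne S), ?_⟩
          rw [← mul_assoc, huv, ← WithOne.coe_mul]
    exact hM.2 _ hI hb
  exact fun a ha b hb => ⟨key a ha b hb, key b hb a ha⟩

lemma extractR (x : S) (w : WithOne S) (hw : (↑(x*x) : WithOne S) * w = (x : WithOne S)) :
    ∃ v : S, (x*x)*v = x := by
  revert hw
  refine WithOne.cases_on w ?_ ?_
  · intro hw
    rw [mul_one, WithOne.coe_inj] at hw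
    exact ⟨x, by rw [hw, hw]⟩
  · intro s hw
    rw [← WithOne.coe_mul, WithOne.coe_inj] at hw
    exact ⟨s, hw⟩

lemma extractL (x : S) (w : WithOne S) (hw : w * (↑(x*x) : WithOne S) = (x : WithOne S)) :
    ∃ u : S, u*(x*x) = x := by
  revert hw
  refine WithOne.cases_on w ?_ ?_
  · intro hw
    rw [one_mul, WithOne.coe_inj] at hw
    exact ⟨x, by rw [hw, hw]⟩
  · intro s hw
    rw [← WithOne.coe_mul, WithOne.coe_inj] at hw
    exact ⟨s, hw⟩

/-- The equational heart: from `u x² = x` and `x² v = x` produce a commuting inner inverse. -/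
lemma eqheart (x u v : S) (hB : u*(x*x) = x) (hA : (x*x)*v = x) :
    x * (x*(v*(u*(x*(v*(u*x)))))) * x = x ∧
      x * (x*(v*(u*(x*(v*(u*x)))))) = (x*(v*(u*(x*(v*(u*x)))))) * x := by
  have hA0 : x*(x*v) = x := by rw [← mul_assoc]; exact hA
  have hA1 : ∀ c : S, x*(x*(v*c)) = x*c := by
    intro c; rw [← mul_assoc, ← mul_assoc, hA]
  have hB1 : ∀ c : S, u*(x*(x*c)) = x*c := by
    intro c; rw [← mul_assoc, ← mul_assoc]
    rw [show u*x*x = x from by rw [mul_assoc]; exact hB]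
  have h1 : x*(v*x) = x := by
    have := (hB1 (v*x)).symm
    rw [this, hA1 x, hB]
  have h2 : x*(u*x) = x := by
    have e1 : u*x = u*(x*(x*v)) := by rw [hA0]
    rw [e1, hB1 v, hA0]
  have h1c : ∀ c : S, x*(v*(x*c)) = x*c := by
    intro c; rw [← mul_assoc, ← mul_assoc, mul_assoc x v x, h1]
  have h2c : ∀ c : S, x*(u*(x*c)) = x*c := by
    intro c; rw [← mul_assoc, ← mul_assoc, mul_assoc x u x, h2]
  set y := x*(v*(u*(x*(v*(u*x))))) with hy
  have hxy : x * y = x*(v*(u*x)) := by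
    rw [hy, hA1 (u*(x*(v*(u*x)))), h2c (v*(u*x))]
  have hyx : y * x = x*(v*(u*x)) := by
    rw [hy]
    rw [mul_assoc, mul_assoc, mul_assoc, mul_assoc, mul_assoc, mul_assoc]
    rw [hB, h1]
  have hhx : (x*(v*(u*x))) * x = x := by
    rw [mul_assoc, mul_assoc, mul_assoc, hB, h1]
  constructor
  · rw [hxy, hhx]
  · rw [hxy, hyx]

/-- Complete regularity of the stable minimal ideal. -/
lemma reg {M : Set S} (hM : SG.IsMinIdeal M) (hs : SG.StableSet M) :
    ∀ x ∈ M, ∃ y ∈ M, x * y * x = x ∧ x * y = y * x := by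
  intro x hx
  have hxx : x*x ∈ M := (hM.1.2 x hx x).1
  have hJ : SG.GreenJ (x*x) x := allJ hM (x*x) hxx x hx
  have hR := (hs x hx x).1 hJ
  have hL := (hs x hx x).2 hJ
  obtain ⟨w1, hw1⟩ := hR.1
  obtain ⟨v, hA⟩ := extractR x w1 hw1
  obtain ⟨w2, hw2⟩ := hL.1
  obtain ⟨u, hB⟩ := extractL x w2 hw2
  refine ⟨x*(v*(u*(x*(v*(u*x))))), ?_, eqheart x u v hB hA⟩
  exact (hM.1.2 x hx _).2

theorem main {S : Type*} [Semigroup S] (M : Set S)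
    (hM : SG.IsMinIdeal M) (hs : SG.StableSet M) :
    (∀ x ∈ M, ∃ y ∈ M, x * y * x = x ∧ x * y = y * x) ∧
    ((∀ x ∈ M, ∀ y ∈ M, SG.GreenH x y → x = y) →
      (∀ x ∈ M, x * x = x) ∧ ∀ x ∈ M, ∀ y ∈ M, x * y * x = x) := by
  refine ⟨reg hM hs, ?_⟩
  intro htriv
  constructor
  · intro x hx
    obtain ⟨y, hyM, hxyx, hcomm⟩ := reg hM hs x hx
    have hxh : x * (x*y) = x := by
      rw [hcomm, ← mul_assoc]; exact hxyx
    have hH : SG.GreenH x (x*y) := by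
      constructor
      · constructor
        · exact ⟨(y : WithOne S), by rw [← WithOne.coe_mul]⟩
        · exact ⟨(x : WithOne S), by rw [← WithOne.coe_mul, WithOne.coe_inj]; exact hxyx⟩
      · constructor
        · exact ⟨(y : WithOne S), by rw [← WithOne.coe_mul, WithOne.coe_inj]; exact hcomm.symm⟩
        · exact ⟨(x : WithOne S), by rw [← WithOne.coe_mul, WithOne.coe_inj]; exact hxh⟩
    have hxeq : x = x*y := htriv x hx (x*y) (hM.1.2 x hx y).2 hH
    have hh : (x*y)*(x*y) = x*y := by rw [← mul_assoc, hxyx]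
    rw [hxeq]; exact hh
  · intro x hx y hy
    have hyx : y*x ∈ M := (hM.1.2 x hx y).1
    have hxyxM : x*y*x ∈ M := ((hM.1.2 _ ((hM.1.2 x hx y).2) x).2)
    have hJ1 : SG.GreenJ (x*(y*x)) x := by
      rw [← mul_assoc]
      exact allJ hM _ hxyxM x hx
    have hJ2 : SG.GreenJ ((x*y)*x) x := allJ hM _ hxyxM x hx
    have hR := (hs x hx (y*x)).1 hJ1
    have hL := (hs x hx (x*y)).2 hJ2
    rw [← mul_assoc] at hR
    have hH : SG.GreenH x (x*y*x) := ⟨⟨hR.2, hR.1⟩, ⟨hL.2, hL.1⟩⟩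
    exact (htriv x hx (x*y*x) hxyxM hH).symm

end SGaux

/-- If `S` has a stable minimal ideal `M`, then `M` is completely regular
(each `x ∈ M` has `y ∈ M` with `xyx = x` and `xy = yx`); if moreover Green's `H` relation
restricted to `M` is trivial, then `M` is a rectangular band. -/
theorem stmt4 {S : Type*} [Semigroup S] (M : Set S)
    (hM : SG.IsMinIdeal M) (hs : SG.StableSet M) :
    (∀ x ∈ M, ∃ y ∈ M, x * y * x = x ∧ x * y = y * x) ∧
    ((∀ x ∈ M, ∀ y ∈ M, SG.GreenH x y → x = y) →
      (∀ x ∈ M, x * x = x) ∧ ∀ x ∈ M, ∀ y ∈ M, x * y * x = x) :=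
  SGaux.main M hM hs
end

section
/- Let S be a semigroup with a stable minimal ideal M. Then the restrictions of Green's relations L, R and H to M are each liftable congruences on M; that is, for each K ∈ {L, R, H}, the relation Δ_S ∪ (K ∩ (M × M)) is a congruence on S. -/
section Aux

open SG

variable {S : Type*} [Semigroup S]

lemma greenL_symm {a b : S} (h : GreenL a b) : GreenL b a := ⟨h.2, h.1⟩

lemma greenR_symm {a b : S} (h : GreenR a b) : GreenR b a := ⟨h.2, h.1⟩

lemma greenL_trans {a b c : S} (h1 : GreenL a b) (h2 : GreenL b c) : GreenL a c := by
  obtain ⟨⟨u1, hu1⟩, ⟨v1, hv1⟩⟩ := h1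
  obtain ⟨⟨u2, hu2⟩, ⟨v2, hv2⟩⟩ := h2
  exact ⟨⟨u2 * u1, by rw [mul_assoc, hu1, hu2]⟩,
         ⟨v1 * v2, by rw [mul_assoc, hv2, hv1]⟩⟩

lemma greenR_trans {a b c : S} (h1 : GreenR a b) (h2 : GreenR b c) : GreenR a c := by
  obtain ⟨⟨u1, hu1⟩, ⟨v1, hv1⟩⟩ := h1
  obtain ⟨⟨u2, hu2⟩, ⟨v2, hv2⟩⟩ := h2
  exact ⟨⟨u1 * u2, by rw [← mul_assoc, hu1, hu2]⟩,
         ⟨v2 * v1, by rw [← mul_assoc, hv2, hv1]⟩⟩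

lemma memJ' {M : Set S} (hM : IsMinIdeal M) {a b : S} (ha : a ∈ M) (hb : b ∈ M) :
    ∃ u v : WithOne S, u * (a : WithOne S) * v = (b : WithOne S) := by
  have hI : IsIdeal {c : S | ∃ u v : WithOne S, u * (a : WithOne S) * v = (c : WithOne S)} := by
    constructor
    · exact ⟨a, 1, 1, by simp⟩
    · rintro x ⟨u, v, huv⟩ c
      constructor
      · exact ⟨(c : WithOne S) * u, v, by
          rw [mul_assoc, mul_assoc, ← mul_assoc u, huv, WithOne.coe_mul]⟩
      · exact ⟨u, v * (c : WithOne S), by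
          rw [← mul_assoc, huv, WithOne.coe_mul]⟩
  exact hM.2 _ hI hb

lemma greenJ_of_mem {M : Set S} (hM : IsMinIdeal M) {a b : S} (ha : a ∈ M) (hb : b ∈ M) :
    GreenJ a b := ⟨memJ' hM ha hb, memJ' hM hb ha⟩

lemma stab_L {M : Set S} (hM : IsMinIdeal M) (hs : StableSet M) {x : S} (hx : x ∈ M) (c : S) :
    GreenL (c * x) x :=
  (hs x hx c).2 (greenJ_of_mem hM ((hM.1.2 x hx c).1) hx)

lemma stab_R {M : Set S} (hM : IsMinIdeal M) (hs : StableSet M) {x : S} (hx : x ∈ M) (c : S) :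
    GreenR (x * c) x :=
  (hs x hx c).1 (greenJ_of_mem hM ((hM.1.2 x hx c).2) hx)

lemma greenL_mul_right {x y : S} (h : GreenL x y) (c : S) : GreenL (x * c) (y * c) := by
  obtain ⟨⟨u, hu⟩, ⟨v, hv⟩⟩ := h
  exact ⟨⟨u, by rw [WithOne.coe_mul, ← mul_assoc, hu, ← WithOne.coe_mul]⟩,
         ⟨v, by rw [WithOne.coe_mul, ← mul_assoc, hv, ← WithOne.coe_mul]⟩⟩

lemma greenR_mul_left {x y : S} (h : GreenR x y) (c : S) : GreenR (c * x) (c * y) := by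
  obtain ⟨⟨u, hu⟩, ⟨v, hv⟩⟩ := h
  exact ⟨⟨u, by rw [WithOne.coe_mul, mul_assoc, hu, ← WithOne.coe_mul]⟩,
         ⟨v, by rw [WithOne.coe_mul, mul_assoc, hv, ← WithOne.coe_mul]⟩⟩

lemma greenL_mul_left {M : Set S} (hM : IsMinIdeal M) (hs : StableSet M) {x y : S}
    (hx : x ∈ M) (hy : y ∈ M) (h : GreenL x y) (c : S) : GreenL (c * x) (c * y) :=
  greenL_trans (greenL_trans (stab_L hM hs hx c) h) (greenL_symm (stab_L hM hs hy c))

lemma greenR_mul_right {M : Set S} (hM : IsMinIdeal M) (hs : StableSet M) {x y : S}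
    (hx : x ∈ M) (hy : y ∈ M) (h : GreenR x y) (c : S) : GreenR (x * c) (y * c) :=
  greenR_trans (greenR_trans (stab_R hM hs hx c) h) (greenR_symm (stab_R hM hs hy c))

end Aux

/-- If `S` has a stable minimal ideal `M`, then the restrictions of
Green's `L`, `R` and `H` relations to `M`, each together with the diagonal of `S`,
are congruences on `S` (i.e. they are liftable congruences on `M`). -/
theorem stmt5 {S : Type*} [Semigroup S] (M : Set S)
    (hM : SG.IsMinIdeal M) (hs : SG.StableSet M) :
    SG.IsCongruence (fun x y : S => x = y ∨ (x ∈ M ∧ y ∈ M ∧ SG.GreenL x y)) ∧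
    SG.IsCongruence (fun x y : S => x = y ∨ (x ∈ M ∧ y ∈ M ∧ SG.GreenR x y)) ∧
    SG.IsCongruence (fun x y : S => x = y ∨ (x ∈ M ∧ y ∈ M ∧ SG.GreenH x y)) := by
  have hMem : ∀ x ∈ M, ∀ c : S, c * x ∈ M ∧ x * c ∈ M := fun x hx c => hM.1.2 x hx c
  refine ⟨⟨⟨fun x => Or.inl rfl, ?_, ?_⟩, ?_⟩, ⟨⟨fun x => Or.inl rfl, ?_, ?_⟩, ?_⟩,
    ⟨⟨fun x => Or.inl rfl, ?_, ?_⟩, ?_⟩⟩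
  · rintro x y (rfl | ⟨hx, hy, h⟩)
    · exact Or.inl rfl
    · exact Or.inr ⟨hy, hx, greenL_symm h⟩
  · rintro x y z (rfl | ⟨hx, hy, h1⟩) h2
    · exact h2
    · rcases h2 with rfl | ⟨_, hz, h2⟩
      · exact Or.inr ⟨hx, hy, h1⟩
      · exact Or.inr ⟨hx, hz, greenL_trans h1 h2⟩
  · rintro a b c (rfl | ⟨ha, hb, h⟩)
    · exact ⟨Or.inl rfl, Or.inl rfl⟩
    · exact ⟨Or.inr ⟨(hMem a ha c).1, (hMem b hb c).1, greenL_mul_left hM hs ha hb h c⟩,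
        Or.inr ⟨(hMem a ha c).2, (hMem b hb c).2, greenL_mul_right h c⟩⟩
  · rintro x y (rfl | ⟨hx, hy, h⟩)
    · exact Or.inl rfl
    · exact Or.inr ⟨hy, hx, greenR_symm h⟩
  · rintro x y z (rfl | ⟨hx, hy, h1⟩) h2
    · exact h2
    · rcases h2 with rfl | ⟨_, hz, h2⟩
      · exact Or.inr ⟨hx, hy, h1⟩
      · exact Or.inr ⟨hx, hz, greenR_trans h1 h2⟩
  · rintro a b c (rfl | ⟨ha, hb, h⟩)
    · exact ⟨Or.inl rfl, Or.inl rfl⟩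
    · exact ⟨Or.inr ⟨(hMem a ha c).1, (hMem b hb c).1, greenR_mul_left h c⟩,
        Or.inr ⟨(hMem a ha c).2, (hMem b hb c).2, greenR_mul_right hM hs ha hb h c⟩⟩
  · rintro x y (rfl | ⟨hx, hy, h⟩)
    · exact Or.inl rfl
    · exact Or.inr ⟨hy, hx, greenR_symm h.1, greenL_symm h.2⟩
  · rintro x y z (rfl | ⟨hx, hy, h1⟩) h2
    · exact h2
    · rcases h2 with rfl | ⟨_, hz, h2⟩
      · exact Or.inr ⟨hx, hy, h1⟩
      · exact Or.inr ⟨hx, hz, greenR_trans h1.1 h2.1, greenL_trans h1.2 h2.2⟩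
  · rintro a b c (rfl | ⟨ha, hb, h⟩)
    · exact ⟨Or.inl rfl, Or.inl rfl⟩
    · exact ⟨Or.inr ⟨(hMem a ha c).1, (hMem b hb c).1, greenR_mul_left h.1 c,
          greenL_mul_left hM hs ha hb h.2 c⟩,
        Or.inr ⟨(hMem a ha c).2, (hMem b hb c).2, greenR_mul_right hM hs ha hb h.1 c,
          greenL_mul_right h.2 c⟩⟩
end

section
/- Let S be a semigroup with a regular minimal ideal M, let I be a retractable ideal of S with retraction f : I → M, and let ξ be a liftable congruence on M. Then the relation ζ = Δ_S ∪ {(x,y) ∈ I × I : (xf, yf) ∈ ξ} is a congruence on S. -/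
/-- Let `S` be a semigroup with a regular minimal ideal `M`, `I` a
retractable ideal with retraction `f`, and `ξ` a liftable congruence on `M`.  Then
`ζ = Δ_S ∪ {(x,y) ∈ I × I : (xf, yf) ∈ ξ}` is a congruence on `S`. -/
theorem stmt6 {S : Type*} [Semigroup S] (M I : Set S) (f : S → S) (ξ : S → S → Prop)
    (hM : SG.IsMinIdeal M) (hreg : SG.RegularSet M)
    (hI : SG.IsIdeal I) (hf : SG.IsRetraction I M f)
    (hsub : ∀ x y : S, ξ x y → x ∈ M ∧ y ∈ M)
    (hrefl : ∀ x ∈ M, ξ x x)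
    (hlift : SG.IsCongruence (fun x y : S => x = y ∨ ξ x y)) :
    SG.IsCongruence (fun x y : S => x = y ∨ (x ∈ I ∧ y ∈ I ∧ ξ (f x) (f y))) := by
  obtain ⟨⟨hMne, hMid⟩, hMmin⟩ := hM
  obtain ⟨hIne, hIid⟩ := hI
  obtain ⟨hfM, hfmul, hffix⟩ := hf
  have hMI : M ⊆ I := hMmin I ⟨hIne, hIid⟩
  -- Two elements of M with equal left and right translations on M are equal.
  have sep : ∀ A ∈ M, ∀ B ∈ M, (∀ m ∈ M, A * m = B * m) → (∀ m ∈ M, m * A = m * B) →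
      A = B := by
    intro A hAM B hBM hright hleft
    obtain ⟨y, hy⟩ := hreg A hAM
    obtain ⟨z, hz⟩ := hreg B hBM
    have hyA : y * A ∈ M := (hMid A hAM y).1
    have hBz : B * z ∈ M := (hMid B hBM z).2
    have hAid : A * (y * A) = A := by rw [← mul_assoc, hy]
    have e1 : B * (y * A) = A := by
      rw [← hright _ hyA, ← mul_assoc, hy]
    have e2 : B * z * A = B := by
      rw [hleft _ hBz, hz]
    calc A = B * (y * A) := e1.symm
      _ = B * z * A * (y * A) := by rw [e2]
      _ = B * z * (A * (y * A)) := by rw [mul_assoc]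
      _ = B * z * A := by rw [hAid]
      _ = B := e2
  -- Key lemma: f (c * a) = c * f a for a ∈ I, c ∈ S.
  have keyL : ∀ a ∈ I, ∀ c : S, f (c * a) = c * f a := by
    intro a ha c
    have hca : c * a ∈ I := (hIid a ha c).1
    have hfa : f a ∈ M := hfM a ha
    have hAM : f (c * a) ∈ M := hfM _ hca
    have hBM : c * f a ∈ M := (hMid (f a) hfa c).1
    refine sep _ hAM _ hBM ?_ ?_
    · intro m hm
      have h3 : a * m ∈ M := (hMid m hm a).1
      have h4 : a * m = f a * m := by
        rw [← hffix _ h3, hfmul a ha m (hMI hm), hffix m hm]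
      calc f (c * a) * m = f (c * a * m) := by
            rw [hfmul _ hca _ (hMI hm), hffix m hm]
        _ = c * a * m := hffix _ ((hMid m hm (c * a)).1)
        _ = c * (a * m) := mul_assoc _ _ _
        _ = c * (f a * m) := by rw [h4]
        _ = c * f a * m := (mul_assoc _ _ _).symm
    · intro m hm
      have hmc : m * c ∈ M := (hMid m hm c).2
      calc m * f (c * a) = f (m * (c * a)) := by
            rw [hfmul _ (hMI hm) _ hca, hffix m hm]
        _ = m * (c * a) := hffix _ ((hMid m hm (c * a)).2)
        _ = m * c * a := (mul_assoc _ _ _).symm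
        _ = f (m * c * a) := (hffix _ ((hMid (m * c) hmc a).2)).symm
        _ = f (m * c) * f a := hfmul _ (hMI hmc) a ha
        _ = m * c * f a := by rw [hffix _ hmc]
        _ = m * (c * f a) := mul_assoc _ _ _
  -- Key lemma (right): f (a * c) = f a * c for a ∈ I, c ∈ S.
  have keyR : ∀ a ∈ I, ∀ c : S, f (a * c) = f a * c := by
    intro a ha c
    have hac : a * c ∈ I := (hIid a ha c).2
    have hfa : f a ∈ M := hfM a ha
    have hAM : f (a * c) ∈ M := hfM _ hac
    have hBM : f a * c ∈ M := (hMid (f a) hfa c).2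
    refine sep _ hAM _ hBM ?_ ?_
    · intro m hm
      have hcm : c * m ∈ M := (hMid m hm c).1
      calc f (a * c) * m = f (a * c * m) := by
            rw [hfmul _ hac _ (hMI hm), hffix m hm]
        _ = a * c * m := hffix _ ((hMid m hm (a * c)).1)
        _ = a * (c * m) := mul_assoc _ _ _
        _ = f (a * (c * m)) := (hffix _ ((hMid (c * m) hcm a).1)).symm
        _ = f a * f (c * m) := hfmul a ha _ (hMI hcm)
        _ = f a * (c * m) := by rw [hffix _ hcm]
        _ = f a * c * m := (mul_assoc _ _ _).symm
    · intro m hm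
      have h3 : m * a ∈ M := (hMid m hm a).2
      have h4 : m * a = m * f a := by
        rw [← hffix _ h3, hfmul m (hMI hm) a ha, hffix m hm]
      calc m * f (a * c) = f (m * (a * c)) := by
            rw [hfmul _ (hMI hm) _ hac, hffix m hm]
        _ = m * (a * c) := hffix _ ((hMid m hm (a * c)).2)
        _ = m * a * c := (mul_assoc _ _ _).symm
        _ = m * f a * c := by rw [h4]
        _ = m * (f a * c) := mul_assoc _ _ _
  constructor
  · refine ⟨fun x => Or.inl rfl, ?_, ?_⟩
    · intro x y h
      rcases h with h | ⟨hx, hy, hξ⟩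
      · exact Or.inl h.symm
      · refine Or.inr ⟨hy, hx, ?_⟩
        rcases hlift.1.symm (Or.inr hξ) with h | h
        · rw [h]; exact hrefl _ (hfM x hx)
        · exact h
    · intro x y z hxy hyz
      rcases hxy with h | ⟨hx, hy, hξ⟩
      · rw [h]; exact hyz
      rcases hyz with h | ⟨hy', hz, hξ'⟩
      · rw [← h]; exact Or.inr ⟨hx, hy, hξ⟩
      · refine Or.inr ⟨hx, hz, ?_⟩
        rcases hlift.1.trans (Or.inr hξ) (Or.inr hξ') with h | h
        · rw [h]; exact hrefl _ (hfM z hz)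
        · exact h
  · intro a b c hab
    rcases hab with h | ⟨ha, hb, hξ⟩
    · rw [h]; exact ⟨Or.inl rfl, Or.inl rfl⟩
    constructor
    · refine Or.inr ⟨(hIid a ha c).1, (hIid b hb c).1, ?_⟩
      rw [keyL a ha c, keyL b hb c]
      rcases (hlift.2 (f a) (f b) c (Or.inr hξ)).1 with h | h
      · rw [h]; exact hrefl _ ((hMid (f b) (hfM b hb) c).1)
      · exact h
    · refine Or.inr ⟨(hIid a ha c).2, (hIid b hb c).2, ?_⟩
      rw [keyR a ha c, keyR b hb c]
      rcases (hlift.2 (f a) (f b) c (Or.inr hξ)).2 with h | h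
      · rw [h]; exact hrefl _ ((hMid (f b) (hfM b hb) c).2)
      · exact h
end

section
/- Let G₁ and G₂ be maximal subgroups contained in the same stable, regular J-class J of a semigroup S. If N₁ is a normal subgroup of G₁, then there exists a normal subgroup N₂ of G₂ such that ν_{N₁} = ν_{N₂}, where ν_N = S¹(N × N)S¹ ∩ (J × J). -/
namespace SGAux
open SG

variable {S : Type*} [Semigroup S]

lemma mulExt {T : Type*} [Semigroup T] {a b d : T} (h : a * b = d) (z : T) :
    a * (b * z) = d * z := by rw [← mul_assoc, h]

lemma coeM {a b d : S} (h : a * b = d) : (a : WithOne S) * b = (d : WithOne S) := by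
  rw [← WithOne.coe_mul, h]

lemma one_or_coe (x : WithOne S) : x = 1 ∨ ∃ a : S, x = ↑a :=
  WithOne.cases_on x (Or.inl rfl) (fun a => Or.inr ⟨a, rfl⟩)

lemma greenJ_symm {a b : S} (h : GreenJ a b) : GreenJ b a := ⟨h.2, h.1⟩

lemma greenJ_trans {a b c : S} (h1 : GreenJ a b) (h2 : GreenJ b c) : GreenJ a c := by
  obtain ⟨⟨u1, v1, e1⟩, ⟨u2, v2, e2⟩⟩ := h1
  obtain ⟨⟨u3, v3, e3⟩, ⟨u4, v4, e4⟩⟩ := h2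
  refine ⟨⟨u3 * u1, v1 * v3, ?_⟩, ⟨u2 * u4, v4 * v2, ?_⟩⟩
  · rw [← e3, ← e1]; simp only [mul_assoc]
  · rw [← e2, ← e4]; simp only [mul_assoc]

lemma greenR_symm {a b : S} (h : GreenR a b) : GreenR b a := ⟨h.2, h.1⟩
lemma greenL_symm {a b : S} (h : GreenL a b) : GreenL b a := ⟨h.2, h.1⟩
lemma greenR_refl (a : S) : GreenR a a := ⟨⟨1, mul_one _⟩, ⟨1, mul_one _⟩⟩
lemma greenL_refl (a : S) : GreenL a a := ⟨⟨1, one_mul _⟩, ⟨1, one_mul _⟩⟩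

lemma greenH_fix {e x : S} (he : e * e = e) (h : GreenH x e) : e * x = x ∧ x * e = x := by
  obtain ⟨⟨⟨u, hu⟩, ⟨v, hv⟩⟩, ⟨⟨z, hz⟩, ⟨w, hw⟩⟩⟩ := h
  have heM : (e : WithOne S) * e = e := coeM he
  constructor
  · exact WithOne.coe_inj.mp (by rw [WithOne.coe_mul, ← hv, ← mul_assoc, heM])
  · exact WithOne.coe_inj.mp (by rw [WithOne.coe_mul, ← hw, mul_assoc, heM])

lemma exists_mid (J : Set S) (hJ : IsJClass J) (hs : StableSet J) {e₁ e₂ : S}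
    (h1 : e₁ ∈ J) (h2 : e₂ ∈ J) : ∃ c : S, GreenR e₁ c ∧ GreenL c e₂ := by
  obtain ⟨a₀, rfl⟩ := hJ
  have h1' : GreenJ a₀ e₁ := h1
  have h2' : GreenJ a₀ e₂ := h2
  have h12 : GreenJ e₁ e₂ := greenJ_trans (greenJ_symm h1') h2'
  obtain ⟨⟨u, v, huv⟩, hback⟩ := h12
  have step1 : ∃ c : S, GreenR e₁ c ∧ GreenJ a₀ c ∧ u * (c : WithOne S) = (e₂ : WithOne S) := by
    rcases one_or_coe v with rfl | ⟨w, rfl⟩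
    · exact ⟨e₁, greenR_refl e₁, h1', by rw [← mul_one (u * (e₁ : WithOne S))]; exact huv⟩
    · have hJc : GreenJ (e₁ * w) e₁ := by
        constructor
        · obtain ⟨u', v', h'⟩ := hback
          refine ⟨u' * u, v', ?_⟩
          rw [WithOne.coe_mul]
          calc u' * u * ((e₁ : WithOne S) * ↑w) * v'
              = u' * (u * ↑e₁ * ↑w) * v' := by simp only [mul_assoc]
            _ = u' * ↑e₂ * v' := by rw [huv]
            _ = ↑e₁ := h'
        · exact ⟨1, ↑w, by rw [WithOne.coe_mul, one_mul]⟩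
      have hR : GreenR (e₁ * w) e₁ := (hs e₁ h1 w).1 hJc
      refine ⟨e₁ * w, greenR_symm hR, greenJ_trans h1' (greenJ_symm hJc), ?_⟩
      rw [WithOne.coe_mul, ← huv]; simp only [mul_assoc]
  obtain ⟨c, hR, hcJ, hc2⟩ := step1
  rcases one_or_coe u with rfl | ⟨p, rfl⟩
  · have hce : c = e₂ := WithOne.coe_inj.mp (by rw [← hc2, one_mul])
    exact ⟨c, hR, by rw [hce]; exact greenL_refl e₂⟩
  · have hpc : p * c = e₂ := WithOne.coe_inj.mp (by rw [WithOne.coe_mul]; exact hc2)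
    have hJ2 : GreenJ (p * c) c := by rw [hpc]; exact greenJ_trans (greenJ_symm h2') hcJ
    have hL : GreenL (p * c) c := (hs c hcJ p).2 hJ2
    rw [hpc] at hL
    exact ⟨c, hR, greenL_symm hL⟩

lemma exists_conj {e₁ e₂ c : S} (he₁ : e₁ * e₁ = e₁) (he₂ : e₂ * e₂ = e₂)
    (hR : GreenR e₁ c) (hL : GreenL c e₂) :
    ∃ c' : S, c * c' = e₁ ∧ c' * c = e₂ ∧ e₁ * c = c ∧ c * e₂ = c ∧
      c' * e₁ = c' ∧ e₂ * c' = c' := by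
  obtain ⟨⟨u₁, hu₁⟩, ⟨v₁, hv₁⟩⟩ := hR
  obtain ⟨⟨z, hz⟩, ⟨w, hw⟩⟩ := hL
  have he₁M : (e₁ : WithOne S) * e₁ = e₁ := coeM he₁
  have he₂M : (e₂ : WithOne S) * e₂ = e₂ := coeM he₂
  have h3M : (e₁ : WithOne S) * c = c := by rw [← hu₁, ← mul_assoc, he₁M]
  have h4M : (c : WithOne S) * e₂ = c := by rw [← hw, mul_assoc, he₂M]
  obtain ⟨c', hc'⟩ : ∃ c' : S, (c' : WithOne S) = ↑e₂ * v₁ * ↑e₁ := by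
    rcases one_or_coe v₁ with rfl | ⟨a, rfl⟩
    · exact ⟨e₂ * e₁, by rw [WithOne.coe_mul, mul_one]⟩
    · exact ⟨e₂ * a * e₁, by rw [WithOne.coe_mul, WithOne.coe_mul]⟩
  have h1M : (c : WithOne S) * c' = e₁ := by
    rw [hc']; simp only [mul_assoc, mulExt h4M, mulExt hv₁, he₁M]
  have h2M : (c' : WithOne S) * c = e₂ := by
    rw [hc']
    calc (e₂ : WithOne S) * v₁ * ↑e₁ * ↑c = ↑e₂ * (v₁ * ↑c) := by
          simp only [mul_assoc, h3M]
      _ = z * ↑c * (v₁ * ↑c) := by rw [hz]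
      _ = z * ↑c := by simp only [mul_assoc, mulExt hv₁, h3M]
      _ = ↑e₂ := hz
  have h5M : (c' : WithOne S) * e₁ = c' := by
    rw [hc']; simp only [mul_assoc, he₁M]
  have h6M : (e₂ : WithOne S) * c' = c' := by
    rw [hc']; simp only [← mul_assoc, he₂M]
  refine ⟨c', ?_, ?_, ?_, ?_, ?_, ?_⟩ <;>
    exact WithOne.coe_inj.mp (by rw [WithOne.coe_mul]; assumption)

end SGAux

/-- Let `G₁ = H_{e₁}` and `G₂ = H_{e₂}` be maximal subgroups contained in
the same stable regular J-class `J` of a semigroup `S`.  If `N₁` is a normal subgroup of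
`G₁`, then there is a normal subgroup `N₂` of `G₂` with `ν_{N₁} = ν_{N₂}`. -/
theorem stmt8 {S : Type*} [Semigroup S] (J N₁ : Set S) (e₁ e₂ : S)
    (hJ : SG.IsJClass J) (hs : SG.StableSet J) (hreg : SG.RegularSet J)
    (he₁ : e₁ * e₁ = e₁) (he₁J : e₁ ∈ J)
    (he₂ : e₂ * e₂ = e₂) (he₂J : e₂ ∈ J)
    (hN₁ : SG.IsNormalIn N₁ {x : S | SG.GreenH x e₁} e₁) :
    ∃ N₂ : Set S, SG.IsNormalIn N₂ {x : S | SG.GreenH x e₂} e₂ ∧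
      ∀ a b : S, SG.Nu J N₁ a b ↔ SG.Nu J N₂ a b := by
  classical
  obtain ⟨c, hR, hL⟩ := SGAux.exists_mid J hJ hs he₁J he₂J
  obtain ⟨c', h1, h2, h3, h4, h5, h6⟩ := SGAux.exists_conj he₁ he₂ hR hL
  obtain ⟨hsub, heN, hclosed, hinv, hconj⟩ := hN₁
  have hfix1 : ∀ x ∈ N₁, e₁ * x = x ∧ x * e₁ = x := fun x hx =>
    SGAux.greenH_fix he₁ (hsub hx)
  have φmul : ∀ x y : S, x * e₁ = x →
      (c' * x * c) * (c' * y * c) = c' * (x * y) * c := by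
    intro x y hx
    simp only [mul_assoc, SGAux.mulExt h1, SGAux.mulExt hx]
  have φe₁ : c' * e₁ * c = e₂ := by rw [h5, h2]
  -- the image subgroup
  refine ⟨{z : S | ∃ x ∈ N₁, z = c' * x * c}, ⟨?_, ?_, ?_, ?_, ?_⟩, ?_⟩
  · -- N₂ ⊆ H_{e₂}
    rintro z ⟨x, hx, rfl⟩
    obtain ⟨x', hx', hxx', hx'x⟩ := hinv x hx
    have m1 : (c' * x * c) * (c' * x' * c) = e₂ := by
      rw [φmul x x' (hfix1 x hx).2, hxx', φe₁]
    have m2 : (c' * x' * c) * (c' * x * c) = e₂ := by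
      rw [φmul x' x (hfix1 x' hx').2, hx'x, φe₁]
    have m3 : e₂ * (c' * x * c) = c' * x * c := by
      simp only [mul_assoc, SGAux.mulExt h6]
    have m4 : (c' * x * c) * e₂ = c' * x * c := by
      simp only [mul_assoc, h4]
    exact ⟨⟨⟨_, SGAux.coeM m1⟩, ⟨_, SGAux.coeM m3⟩⟩,
      ⟨⟨_, SGAux.coeM m2⟩, ⟨_, SGAux.coeM m4⟩⟩⟩
  · -- e₂ ∈ N₂
    exact ⟨e₁, heN, φe₁.symm⟩
  · -- closed under multiplication
    rintro z ⟨x, hx, rfl⟩ w ⟨y, hy, rfl⟩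
    exact ⟨x * y, hclosed x hx y hy, φmul x y (hfix1 x hx).2⟩
  · -- inverses
    rintro z ⟨x, hx, rfl⟩
    obtain ⟨x', hx', hxx', hx'x⟩ := hinv x hx
    refine ⟨c' * x' * c, ⟨x', hx', rfl⟩, ?_, ?_⟩
    · rw [φmul x x' (hfix1 x hx).2, hxx', φe₁]
    · rw [φmul x' x (hfix1 x' hx').2, hx'x, φe₁]
  · -- conjugation
    intro g hg g' hg' hgg' hg'g z hz
    obtain ⟨n, hn, rfl⟩ := hz
    have hg2 : e₂ * g = g ∧ g * e₂ = g := SGAux.greenH_fix he₂ hg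
    have hg'2 : e₂ * g' = g' ∧ g' * e₂ = g' := SGAux.greenH_fix he₂ hg'
    have ψmul : ∀ a b : S, a * e₂ = a →
        (c * a * c') * (c * b * c') = c * (a * b) * c' := by
      intro a b ha
      simp only [mul_assoc, SGAux.mulExt h2, SGAux.mulExt ha]
    have ψe₂ : c * e₂ * c' = e₁ := by rw [h4, h1]
    have mh1 : (c * g * c') * (c * g' * c') = e₁ := by
      rw [ψmul g g' hg2.2, hgg', ψe₂]
    have mh2 : (c * g' * c') * (c * g * c') = e₁ := by
      rw [ψmul g' g hg'2.2, hg'g, ψe₂]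
    have mh3 : e₁ * (c * g * c') = c * g * c' := by
      simp only [mul_assoc, SGAux.mulExt h3]
    have mh4 : (c * g * c') * e₁ = c * g * c' := by
      simp only [mul_assoc, h5]
    have mh3' : e₁ * (c * g' * c') = c * g' * c' := by
      simp only [mul_assoc, SGAux.mulExt h3]
    have mh4' : (c * g' * c') * e₁ = c * g' * c' := by
      simp only [mul_assoc, h5]
    have hH : SG.GreenH (c * g * c') e₁ :=
      ⟨⟨⟨_, SGAux.coeM mh1⟩, ⟨_, SGAux.coeM mh3⟩⟩,
       ⟨⟨_, SGAux.coeM mh2⟩, ⟨_, SGAux.coeM mh4⟩⟩⟩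
    have hH' : SG.GreenH (c * g' * c') e₁ :=
      ⟨⟨⟨_, SGAux.coeM mh2⟩, ⟨_, SGAux.coeM mh3'⟩⟩,
       ⟨⟨_, SGAux.coeM mh1⟩, ⟨_, SGAux.coeM mh4'⟩⟩⟩
    refine ⟨(c * g * c') * n * (c * g' * c'),
      hconj _ hH _ hH' mh1 mh2 n hn, ?_⟩
    simp only [mul_assoc, h2, SGAux.mulExt h2, hg'2.2, SGAux.mulExt hg2.1]
  · -- Nu equality
    intro a b
    have h1M : (c : WithOne S) * c' = e₁ := SGAux.coeM h1
    constructor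
    · rintro ⟨haJ, hbJ, x, hx, y, hy, s, t, hsa, hsb⟩
      have hx1 := hfix1 x hx
      have hy1 := hfix1 y hy
      have hx1M : (e₁ : WithOne S) * x = x := SGAux.coeM hx1.1
      have hx2M : (x : WithOne S) * e₁ = x := SGAux.coeM hx1.2
      have hy1M : (e₁ : WithOne S) * y = y := SGAux.coeM hy1.1
      have hy2M : (y : WithOne S) * e₁ = y := SGAux.coeM hy1.2
      refine ⟨haJ, hbJ, c' * x * c, ⟨x, hx, rfl⟩, c' * y * c, ⟨y, hy, rfl⟩,
        s * ↑c, ↑c' * t, ?_, ?_⟩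
      · rw [← hsa]
        simp only [WithOne.coe_mul, mul_assoc, SGAux.mulExt h1M,
          SGAux.mulExt hx2M, SGAux.mulExt hx1M]
      · rw [← hsb]
        simp only [WithOne.coe_mul, mul_assoc, SGAux.mulExt h1M,
          SGAux.mulExt hy2M, SGAux.mulExt hy1M]
    · rintro ⟨haJ, hbJ, _, ⟨x, hx, rfl⟩, _, ⟨y, hy, rfl⟩, s, t, hsa, hsb⟩
      refine ⟨haJ, hbJ, x, hx, y, hy, s * ↑c', ↑c * t, ?_, ?_⟩
      · rw [← hsa]; simp only [WithOne.coe_mul, mul_assoc]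
      · rw [← hsb]; simp only [WithOne.coe_mul, mul_assoc]
end
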